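/- arXiv:1701.07189 — 2 statements merged into one kernel-verified Lean document; each statement's English description precedes it below -/
import Mathlib

section
/- Let S be an ordered semigroup which is a complete semilattice of subsemigroups each of which is a nil extension of a simple ordered regular semigroup. Then for all a, b ∈ S there exists n ∈ ℕ such that (ab)^n ∈ ((ab)^n S a² S (ab)^n]. -/
variable {S : Type*} [Semigroup S] [PartialOrder S]
  [CovariantClass S S (· * ·) (· ≤ ·)]
  [CovariantClass S S (Function.swap (· * ·)) (· ≤ ·)]

/-- `ppow a n` is the `(n+1)`-st power of `a` in a semigroup. -/
def ppow (a : S) : ℕ → S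
  | 0 => a
  | n + 1 => ppow a n * a

/-- `(H]`, the downward closure of `H`. -/
def dcl (H : Set S) : Set S := {t | ∃ h ∈ H, t ≤ h}

/-- `K` is an (two-sided) ideal of the ordered subsemigroup `T`. -/
def IsIdealIn (T K : Set S) : Prop :=
  K.Nonempty ∧ K ⊆ T ∧ (∀ s ∈ T, ∀ x ∈ K, s * x ∈ K ∧ x * s ∈ K) ∧
    ∀ t ∈ T, ∀ x ∈ K, t ≤ x → t ∈ K

/-- `K` is a left ideal of the ordered subsemigroup `T`. -/
def IsLeftIdealIn (T K : Set S) : Prop :=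
  K.Nonempty ∧ K ⊆ T ∧ (∀ s ∈ T, ∀ x ∈ K, s * x ∈ K) ∧
    ∀ t ∈ T, ∀ x ∈ K, t ≤ x → t ∈ K

/-- `T` is simple: it has no proper ideal. -/
def SimpleIn (T : Set S) : Prop := ∀ K : Set S, IsIdealIn T K → K = T

/-- `T` is left simple: it has no proper left ideal. -/
def LeftSimpleIn (T : Set S) : Prop := ∀ K : Set S, IsLeftIdealIn T K → K = T

/-- `T` is a nil extension of `K`: `K` is an ideal of `T` and every element of
`T` has a power in `K`. -/
def IsNilExtOf (T K : Set S) : Prop :=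
  IsIdealIn T K ∧ ∀ a ∈ T, ∃ m : ℕ, ppow a m ∈ K

/-- `T` is an ordered regular subsemigroup. -/
def OrdRegularIn (T : Set S) : Prop := ∀ a ∈ T, ∃ x ∈ T, a ≤ a * x * a

/-- `T` is a right regular subsemigroup. -/
def RightRegularIn (T : Set S) : Prop := ∀ a ∈ T, ∃ x ∈ T, a ≤ a * a * x

/-- `T` is a completely regular subsemigroup. -/
def CompRegularIn (T : Set S) : Prop := ∀ a ∈ T, ∃ x ∈ T, a ≤ a * a * x * (a * a)

/-- A complete semilattice congruence on an ordered semigroup. -/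
structure CompleteSemilatticeCongruence (ρ : S → S → Prop) : Prop where
  equiv : Equivalence ρ
  mul_left : ∀ a b c : S, ρ a b → ρ (c * a) (c * b)
  mul_right : ∀ a b c : S, ρ a b → ρ (a * c) (b * c)
  sq : ∀ a : S, ρ a (a * a)
  comm : ∀ a b : S, ρ (a * b) (b * a)
  complete : ∀ a b : S, a ≤ b → ρ a (a * b)

/-- The `ρ`-class (component) of `a`. -/
def cls (ρ : S → S → Prop) (a : S) : Set S := {x | ρ x a}

/-- `a ∣ b` in `S¹`:  `b ≤ x a y` for some `x, y ∈ S¹`. -/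
def dvd1 (a b : S) : Prop :=
  b ≤ a ∨ (∃ x : S, b ≤ x * a) ∨ (∃ y : S, b ≤ a * y) ∨ ∃ x y : S, b ≤ x * a * y

/-- `a` is intra-regular: `a ≤ x a² y` for some `x, y ∈ S¹`. -/
def IntraReg (a : S) : Prop :=
  a ≤ a * a ∨ (∃ x : S, a ≤ x * (a * a)) ∨ (∃ y : S, a ≤ a * a * y) ∨
    ∃ x y : S, a ≤ x * (a * a) * y

/-- In a simple subsemigroup `K` (which is an ideal of some `T`), every
element divides every other: for `u, v ∈ K` there are `x, y ∈ K` with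
`v ≤ x * u * y`. -/
lemma simple_div {T K : Set S} (hK : IsIdealIn T K) (hs : SimpleIn K)
    {u : S} (hu : u ∈ K) : ∀ v ∈ K, ∃ x ∈ K, ∃ y ∈ K, v ≤ x * u * y := by
  obtain ⟨hne, hsub, hprod, hdown⟩ := hK
  have mulK : ∀ {k₁ k₂ : S}, k₁ ∈ K → k₂ ∈ K → k₁ * k₂ ∈ K := fun h1 h2 =>
    (hprod _ (hsub h1) _ h2).1
  set I : Set S := {t | t ∈ K ∧ ∃ x ∈ K, ∃ y ∈ K, t ≤ x * u * y} with hI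
  have hIK : I = K := by
    apply hs
    refine ⟨⟨u * u * u, ⟨mulK (mulK hu hu) hu, u, hu, u, hu, le_rfl⟩⟩,
      fun t ht => ht.1, ?_, ?_⟩
    · rintro s hsK t ⟨htK, x, hx, y, hy, hle⟩
      constructor
      · refine ⟨mulK hsK htK, s * x, mulK hsK hx, y, hy, ?_⟩
        calc s * t ≤ s * (x * u * y) := mul_le_mul_right hle s
          _ = s * x * u * y := by simp [mul_assoc]
      · refine ⟨mulK htK hsK, x, hx, y * s, mulK hy hsK, ?_⟩
        calc t * s ≤ x * u * y * s := mul_le_mul_left hle s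
          _ = x * u * (y * s) := by simp [mul_assoc]
    · rintro t htK x ⟨hxK, x', hx', y', hy', hle⟩ hle'
      exact ⟨htK, x', hx', y', hy', le_trans hle' hle⟩
  intro v hv
  have : v ∈ I := hIK ▸ hv
  exact this.2

lemma ppow_rel {ρ : S → S → Prop} (hρ : CompleteSemilatticeCongruence ρ)
    (c : S) : ∀ m : ℕ, ρ (ppow c m) c := by
  intro m
  induction m with
  | zero => exact hρ.equiv.refl c
  | succ n ih =>
    have h1 : ρ (ppow c n * c) (c * c) := hρ.mul_right _ _ _ ih
    exact hρ.equiv.trans h1 (hρ.equiv.symm (hρ.sq c))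

/-- If `S` is a complete semilattice of subsemigroups, each a nil extension of
a simple ordered regular semigroup, then for all `a, b ∈ S` there is `n` with
`(ab)^n ∈ ((ab)^n S a² S (ab)^n]`. -/
theorem semilattice_nilext_simple_regular_pow (ρ : S → S → Prop)
    (hρ : CompleteSemilatticeCongruence ρ)
    (hdec : ∀ a : S, ∃ K : Set S,
      IsNilExtOf (cls ρ a) K ∧ SimpleIn K ∧ OrdRegularIn K) :
    ∀ a b : S, ∃ n : ℕ,
      ppow (a * b) n ∈ dcl {y : S | ∃ s t : S,
        y = ppow (a * b) n * s * (a * a) * t * ppow (a * b) n} := by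
  intro a b
  set c := a * b with hc
  obtain ⟨K, ⟨hKid, hnil⟩, hsimple, hreg⟩ := hdec c
  have hcc : c ∈ cls ρ c := hρ.equiv.refl c
  obtain ⟨m, hm⟩ := hnil c hcc
  set u := ppow c m with hu
  have hrel_u : ρ u c := ppow_rel hρ c m
  -- ρ (u * a * a) c
  have hrel1 : ρ (u * a * a) c := by
    have h1 : ρ (u * a * a) (c * a * a) :=
      hρ.mul_right _ _ _ (hρ.mul_right _ _ _ hrel_u)
    have h2 : ρ (c * a * a) (c * a) := by
      have : ρ (c * (a * a)) (c * a) := hρ.mul_left _ _ _ (hρ.equiv.symm (hρ.sq a))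
      simpa [mul_assoc] using this
    have h3 : ρ (c * a) (a * c) := hρ.comm c a
    have h4 : ρ (a * c) c := by
      have : ρ (a * a * b) (a * b) := hρ.mul_right _ _ _ (hρ.equiv.symm (hρ.sq a))
      simpa [hc, mul_assoc] using this
    exact hρ.equiv.trans h1 (hρ.equiv.trans h2 (hρ.equiv.trans h3 h4))
  -- w := u * a * a * u ∈ K
  set w := u * a * a * u with hw
  have hwK : w ∈ K := (hKid.2.2.1 _ hrel1 _ hm).1
  -- regularity of u in K
  obtain ⟨x, hxK, hux⟩ := hreg u hm
  -- simple: x ≤ x₁ * w * y₁ for some x₁, y₁ ∈ K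
  obtain ⟨x₁, hx₁K, y₁, hy₁K, hxle⟩ := simple_div hKid hsimple hwK x hxK
  -- chain of inequalities
  have key : u ≤ u * (x₁ * u) * (a * a) * (u * y₁) * u := by
    have h1 : u * x * u ≤ u * (x₁ * w * y₁) * u :=
      mul_le_mul_left (mul_le_mul_right hxle u) u
    have h2 : u * (x₁ * w * y₁) * u = u * (x₁ * u) * (a * a) * (u * y₁) * u := by
      simp [hw, mul_assoc]
    exact le_trans hux (h2 ▸ h1)
  exact ⟨m, u * (x₁ * u) * (a * a) * (u * y₁) * u, ⟨x₁ * u, u * y₁, rfl⟩, key⟩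
end

section
/- Let S be an ordered semigroup which is a complete semilattice of subsemigroups S_α, each a nil extension of a completely regular ordered semigroup K_α, such that every L-class of S containing a completely regular element a ∈ S_α equals K_α. Then S is completely π-regular and each S_α is left Archimedean: for all a, b ∈ S_α there exists m ∈ ℕ with a^m ∈ (S_α b]. -/
variable {S : Type*} [Semigroup S] [PartialOrder S]
  [CovariantClass S S (· * ·) (· ≤ ·)]
  [CovariantClass S S (Function.swap (· * ·)) (· ≤ ·)]

/-- The principal left ideal `L(a) = (a ∪ Sa]` of `a`, as a set. -/
def Lset (a : S) : Set S := {t : S | t ≤ a ∨ ∃ s : S, t ≤ s * a}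

lemma ppow_add_one (a : S) (m n : ℕ) : ppow a (m + n + 1) = ppow a m * ppow a n := by
  induction n with
  | zero => rfl
  | succ k ih =>
    show ppow a (m + k + 1) * a = ppow a m * (ppow a k * a)
    rw [ih, mul_assoc]

lemma rho_ppow {ρ : S → S → Prop} (hρ : CompleteSemilatticeCongruence ρ)
    (a : S) (n : ℕ) : ρ (ppow a n) a := by
  induction n with
  | zero => exact hρ.equiv.refl a
  | succ k ih =>
    exact hρ.equiv.trans (hρ.mul_right _ _ a ih) (hρ.equiv.symm (hρ.sq a))

lemma rho_mul_cls {ρ : S → S → Prop} (hρ : CompleteSemilatticeCongruence ρ)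
    {u v a : S} (hu : ρ u a) (hv : ρ v a) : ρ (u * v) a :=
  hρ.equiv.trans (hρ.mul_right u a v hu)
    (hρ.equiv.trans (hρ.mul_left v a a hv) (hρ.equiv.symm (hρ.sq a)))

lemma rho_absorb {ρ : S → S → Prop} (hρ : CompleteSemilatticeCongruence ρ)
    (x w : S) : ρ ((x * w) * x) (x * w) := by
  have h1 : ρ ((x * w) * x) (x * (x * w)) := hρ.comm (x * w) x
  have h2 : ρ (x * (x * w)) (x * w) := by
    rw [← mul_assoc]
    exact hρ.mul_right (x * x) x w (hρ.equiv.symm (hρ.sq x))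
  exact hρ.equiv.trans h1 h2

lemma rho_cls_of_factor {ρ : S → S → Prop} (hρ : CompleteSemilatticeCongruence ρ)
    {a b X w : S} (hXa : ρ X a) (hba : ρ b a)
    (hu : ρ ((X * w) * b) a) : ρ (X * w) a := by
  have hsa_s : ρ ((X * w) * a) (X * w) :=
    hρ.equiv.trans (hρ.mul_left a X (X * w) (hρ.equiv.symm hXa)) (rho_absorb hρ X w)
  have hsb_sa : ρ ((X * w) * b) ((X * w) * a) := hρ.mul_left b a (X * w) hba
  have hsa_a : ρ ((X * w) * a) a := hρ.equiv.trans (hρ.equiv.symm hsb_sa) hu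
  exact hρ.equiv.trans (hρ.equiv.symm hsa_s) hsa_a

/-- If `S` is a complete semilattice of subsemigroups `S_α`, each a nil
extension of a completely regular kernel `K_α`, and every `L`-class of `S`
containing a completely regular element `a ∈ S_α` equals `K_α`, then `S` is
completely `π`-regular and each `S_α` is left Archimedean. -/
theorem comp_pi_regular_and_left_archimedean (ρ : S → S → Prop)
    (hρ : CompleteSemilatticeCongruence ρ) (Kk : S → Set S)
    (hKcong : ∀ a b : S, ρ a b → Kk a = Kk b)
    (hnil : ∀ a : S, IsNilExtOf (cls ρ a) (Kk a))
    (hcr : ∀ a : S, CompRegularIn (Kk a))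
    (hL : ∀ a : S, (∃ x : S, a ≤ a * a * x * (a * a)) →
      {b : S | Lset b = Lset a} = Kk a) :
    (∀ a : S, ∃ m : ℕ, ∃ x : S, ppow a m ≤ ppow a (m + 1) * x * ppow a (m + 1)) ∧
    (∀ a b : S, ρ a b → ∃ m : ℕ, ∃ s : S, ρ s a ∧ ppow a m ≤ s * b) := by
  constructor
  · -- complete π-regularity
    intro a
    obtain ⟨m, hm⟩ := (hnil a).2 a (hρ.equiv.refl a)
    obtain ⟨x, hxK, hx⟩ := hcr a _ hm
    cases m with
    | zero => exact ⟨0, x, hx⟩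
    | succ n =>
      refine ⟨n + 1, ppow a n * x * ppow a n, ?_⟩
      have e1 : ppow a (n + 1) * ppow a (n + 1) = ppow a (n + 2) * ppow a n := by
        rw [← ppow_add_one, ← ppow_add_one]
        congr 1
        omega
      have e2 : ppow a (n + 1) * ppow a (n + 1) = ppow a n * ppow a (n + 2) := by
        rw [← ppow_add_one, ← ppow_add_one]
        congr 1
        omega
      have key : ppow a (n + 1) * ppow a (n + 1) * x *
          (ppow a (n + 1) * ppow a (n + 1)) =
          ppow a (n + 2) * (ppow a n * x * ppow a n) * ppow a (n + 2) := by
        nth_rewrite 1 [e1]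
        nth_rewrite 1 [e2]
        simp [mul_assoc]
      rw [key] at hx
      exact hx
  · -- left Archimedean
    intro a b hab
    have hba : ρ b a := hρ.equiv.symm hab
    obtain ⟨p, hX⟩ := (hnil a).2 a (hρ.equiv.refl a)
    have hXa : ρ (ppow a p) a := rho_ppow hρ a p
    obtain ⟨q, hYb⟩ := (hnil b).2 b (hρ.equiv.refl b)
    have hY : ppow b q ∈ Kk a := by
      rw [← hKcong b a hba]
      exact hYb
    have hbT : b ∈ cls ρ a := hba
    have hXT : ppow a p ∈ cls ρ a := (hnil a).1.2.1 hX
    have hY' : ppow b q * b ∈ Kk a := ((hnil a).1.2.2.1 b hbT (ppow b q) hY).2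
    have hZ : ppow a p * (ppow b q * b) ∈ Kk a :=
      ((hnil a).1.2.2.1 (ppow a p) hXT (ppow b q * b) hY').1
    obtain ⟨x, hxK, hxineq⟩ := hcr a (ppow a p) hX
    have hLX := hL (ppow a p) ⟨x, hxineq⟩
    have hKXa : Kk (ppow a p) = Kk a := hKcong (ppow a p) a hXa
    have hZmem : ppow a p * (ppow b q * b) ∈ {c : S | Lset c = Lset (ppow a p)} := by
      rw [hLX, hKXa]
      exact hZ
    have hZL : Lset (ppow a p * (ppow b q * b)) = Lset (ppow a p) := hZmem
    have hXmem : ppow a p ∈ Lset (ppow a p * (ppow b q * b)) := by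
      rw [hZL]
      exact Or.inl le_rfl
    rcases hXmem with h | ⟨t, h⟩
    · refine ⟨p, ppow a p * ppow b q,
        rho_mul_cls hρ hXa (hρ.equiv.trans (rho_ppow hρ b q) hba), ?_⟩
      calc ppow a p ≤ ppow a p * (ppow b q * b) := h
        _ = ppow a p * ppow b q * b := (mul_assoc _ _ _).symm
    · have hcompl : ρ (ppow a p) (ppow a p * (t * (ppow a p * (ppow b q * b)))) :=
        hρ.complete _ _ h
      have hueq : ppow a p * (t * (ppow a p * (ppow b q * b))) =
          (ppow a p * (t * (ppow a p * ppow b q))) * b := by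
        simp [mul_assoc]
      have hua : ρ ((ppow a p * (t * (ppow a p * ppow b q))) * b) a :=
        hueq ▸ (hρ.equiv.trans (hρ.equiv.symm hcompl) hXa)
      have hsa : ρ (ppow a p * (t * (ppow a p * ppow b q))) a :=
        rho_cls_of_factor hρ hXa hba hua
      refine ⟨p + p + 1, ppow a p * (t * (ppow a p * ppow b q)), hsa, ?_⟩
      rw [ppow_add_one]
      calc ppow a p * ppow a p ≤ ppow a p * (t * (ppow a p * (ppow b q * b))) :=
            mul_le_mul_right h (ppow a p)
        _ = _ := hueq
end
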